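/- Let $S_1, \dots, S_{k+1}$ be compact convex sets in $\mathbb{R}^d$ ($1 \leq k \leq d-1$) and let $\vec{r} = \{a e_d : a \geq 0\}$ be the nonnegative $d$-th coordinate ray. Suppose that no $k$-flat intersecting all of $S_1, \dots, S_{k+1}$ contains a straight line parallel to $\vec{r}$. Then there exists $n' \in \mathbb{N}$ such that the region $Q(\vec{r}, n') = \mathrm{cone}(\vec{r}, 1/n') \setminus B(0, n')$ is disjoint from the union of all $k$-flats intersecting all of $S_1, \dots, S_{k+1}$. -/

import Mathlib

/-- A `k`-flat in `ℝ^d`: a (nonempty) affine subspace of dimension `k`. -/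
def IsKFlat {d : ℕ} (k : ℕ) (F : Set (EuclideanSpace ℝ (Fin d))) : Prop :=
  ∃ A : AffineSubspace ℝ (EuclideanSpace ℝ (Fin d)),
    (A : Set (EuclideanSpace ℝ (Fin d))).Nonempty ∧
    Module.finrank ℝ A.direction = k ∧ F = ↑A

/-- A collection `T` of `k`-flats pierces the family `𝓕`. -/
def PiercedByFlats {d : ℕ} (k : ℕ) (T 𝓕 : Set (Set (EuclideanSpace ℝ (Fin d)))) : Prop :=
  (∀ f ∈ T, IsKFlat k f) ∧ ∀ B ∈ 𝓕, ∃ f ∈ T, (B ∩ f).Nonempty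

/-- The family `𝓕` is pierceable by finitely many `k`-flats. -/
def FinFlatPierceable {d : ℕ} (k : ℕ) (𝓕 : Set (Set (EuclideanSpace ℝ (Fin d)))) : Prop :=
  ∃ T : Set (Set (EuclideanSpace ℝ (Fin d))), T.Finite ∧ PiercedByFlats k T 𝓕

/-- The family `𝓕` is pierceable by finitely many points. -/
def FinPointPierceable {d : ℕ} (𝓕 : Set (Set (EuclideanSpace ℝ (Fin d)))) : Prop :=
  ∃ P : Set (EuclideanSpace ℝ (Fin d)), P.Finite ∧ ∀ B ∈ 𝓕, ∃ p ∈ P, p ∈ B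

/-- The ray from the origin in direction `v`. -/
def rayOf {d : ℕ} (v : EuclideanSpace ℝ (Fin d)) : Set (EuclideanSpace ℝ (Fin d)) :=
  {x | ∃ a : ℝ, 0 ≤ a ∧ x = a • v}

/-- The convex circular cone about the ray in direction `v` with aperture `1/n`:
points whose distance to the ray is at most `‖x‖ / n`. -/
def coneOf {d : ℕ} (v : EuclideanSpace ℝ (Fin d)) (n : ℕ) :
    Set (EuclideanSpace ℝ (Fin d)) :=
  {x | Metric.infDist x (rayOf v) ≤ ‖x‖ / n}

/-- `Q(r⃗, n)`: the cone of aperture `1/n` about the ray with the closed ball of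
radius `n` about the origin removed. -/
def Qreg {d : ℕ} (v : EuclideanSpace ℝ (Fin d)) (n : ℕ) :
    Set (EuclideanSpace ℝ (Fin d)) :=
  coneOf v n \ Metric.closedBall 0 n

/-- The `d`-th standard basis direction of `ℝ^d` (index `d-1`). -/
noncomputable def eLast (d : ℕ) : EuclideanSpace ℝ (Fin d) :=
  WithLp.toLp 2 (fun i => if (i : ℕ) = d - 1 then 1 else 0)

/-!
Suppose not. Then for every `n` some `k`-flat meeting all `S i` contains a point `x n` of
`Q(e, n + 1)`; since these points escape to infinity inside ever narrower cones, the unit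
vectors from a contact point `q n ∈ S 0` of the flat towards `x n` tend to `e`. Describe the
flats by orthonormal frames of their directions and pass to a subsequence along which the frames
and the contact points with the compact sets `S i` converge. The limit frame is still
orthonormal, and spanning it is a closed condition, so the limit flat is a `k`-flat meeting
every `S i` whose direction contains `e`: it contains a line parallel to `e`.
-/

open RealInnerProductSpace Filter Metric Topology Set Submodule NormedSpace

section InnerProductSpace

variable {E : Type*} [NormedAddCommGroup E] [InnerProductSpace ℝ E]

lemma Orthonormal.sum_inner_smul_eq_of_mem_span {ι : Type*} [Fintype ι] {b : ι → E}
    (hb : Orthonormal ℝ b) {v : E} (hv : v ∈ span ℝ (range b)) :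
    ∑ j, ⟪b j, v⟫ • b j = v := by
  obtain ⟨c, rfl⟩ := (mem_span_range_iff_exists_fun ℝ).mp hv
  simp [hb.inner_right_fintype]

lemma Submodule.exists_orthonormal_span_eq [FiniteDimensional ℝ E] {k : ℕ} (V : Submodule ℝ E)
    (hV : Module.finrank ℝ V = k) :
    ∃ b : Fin k → E, Orthonormal ℝ b ∧ span ℝ (range b) = V := by
  let o := (stdOrthonormalBasis ℝ V).reindex (finCongr hV)
  refine ⟨V.subtype ∘ o, o.orthonormal.comp_linearIsometry V.subtypeₗᵢ, ?_⟩
  rw [range_comp, span_image, ← o.coe_toBasis, o.toBasis.span_eq, map_top, range_subtype]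

lemma isClosed_setOf_orthonormal {ι : Type*} : IsClosed {b : ι → E | Orthonormal ℝ b} := by
  classical
  have : {b : ι → E | Orthonormal ℝ b} =
      ⋂ i, ⋂ j, {b | ⟪b i, b j⟫ = if i = j then 1 else 0} := by
    ext b; simp only [mem_ofPred_eq, orthonormal_iff_ite, mem_iInter]
  rw [this]
  exact isClosed_iInter fun i => isClosed_iInter fun j =>
    isClosed_eq (by fun_prop) continuous_const

lemma isCompact_setOf_orthonormal [FiniteDimensional ℝ E] {ι : Type*} [Finite ι] :
    IsCompact {b : ι → E | Orthonormal ℝ b} :=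
  (isCompact_univ_pi fun _ => isCompact_sphere (0 : E) 1).of_isClosed_subset
    isClosed_setOf_orthonormal fun b hb i _ => by simpa using hb.1 i

-- For orthonormal `b`, membership in the span is the closed equation `∑ j, ⟪b j, v⟫ • b j = v`.
lemma isClosed_setOf_orthonormal_and_mem_span {ι : Type*} [Fintype ι] :
    IsClosed {p : (ι → E) × E | Orthonormal ℝ p.1 ∧ p.2 ∈ span ℝ (range p.1)} := by
  have : {p : (ι → E) × E | Orthonormal ℝ p.1 ∧ p.2 ∈ span ℝ (range p.1)} =
      Prod.fst ⁻¹' {b | Orthonormal ℝ b} ∩ {p | ∑ j, ⟪p.1 j, p.2⟫ • p.1 j = p.2} := by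
    ext ⟨b, v⟩
    refine ⟨fun ⟨hb, hv⟩ => ⟨hb, hb.sum_inner_smul_eq_of_mem_span hv⟩, fun ⟨hb, hv⟩ => ⟨hb, ?_⟩⟩
    rw [← show ∑ j, ⟪b j, v⟫ • b j = v from hv]
    exact sum_mem fun j _ => smul_mem _ _ (subset_span ⟨j, rfl⟩)
  rw [this]
  exact (isClosed_setOf_orthonormal.preimage continuous_fst).inter
    (isClosed_eq (by fun_prop) continuous_snd)

theorem exists_affineSubspace_of_tendsto_mem_direction [FiniteDimensional ℝ E]
    {ι : Type*} [Fintype ι] [Nonempty ι] {S : ι → Set E} (hS : ∀ i, IsCompact (S i)) {k : ℕ}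
    {A : ℕ → AffineSubspace ℝ E} (hA : ∀ n, Module.finrank ℝ (A n).direction = k)
    (hAS : ∀ n i, ((A n : Set E) ∩ S i).Nonempty) {u : ℕ → E} {e : E}
    (hu : ∀ n, u n ∈ (A n).direction) (hue : Tendsto u atTop (𝓝 e)) :
    ∃ A' : AffineSubspace ℝ E, Module.finrank ℝ A'.direction = k ∧
      (∀ i, ((A' : Set E) ∩ S i).Nonempty) ∧ e ∈ A'.direction := by
  choose b hb hbA using fun n => (A n).direction.exists_orthonormal_span_eq (hA n)
  choose q hqA hqS using hAS
  obtain ⟨⟨p, c⟩, ⟨hpS, hc⟩, φ, hφ, hlim⟩ :=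
    ((isCompact_univ_pi hS).prod isCompact_setOf_orthonormal).tendsto_subseq
      (x := fun n => (q n, b n)) fun n => ⟨fun i _ => hqS n i, hb n⟩
  have hqp : ∀ i, Tendsto (fun n => q (φ n) i) atTop (𝓝 (p i)) := fun i =>
    ((continuous_apply i).tendsto p).comp (continuous_fst.tendsto _ |>.comp hlim)
  have hbc : Tendsto (fun n => b (φ n)) atTop (𝓝 c) := continuous_snd.tendsto _ |>.comp hlim
  have hspan : ∀ {v : ℕ → E} {w : E}, (∀ n, v n ∈ (A n).direction) →
      Tendsto (fun n => v (φ n)) atTop (𝓝 w) → w ∈ span ℝ (range c) := fun hv hvw =>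
    (isClosed_setOf_orthonormal_and_mem_span.mem_of_tendsto (hbc.prodMk_nhds hvw)
      (Eventually.of_forall fun n => ⟨hb (φ n), (hbA (φ n)).symm ▸ hv (φ n)⟩)).2
  obtain ⟨i₀⟩ := ‹Nonempty ι›
  refine ⟨AffineSubspace.mk' (p i₀) (span ℝ (range c)), ?_, fun i => ⟨p i, ?_, hpS i trivial⟩, ?_⟩
  · rw [AffineSubspace.direction_mk', finrank_span_eq_card hc.linearIndependent, Fintype.card_fin]
  · exact AffineSubspace.mem_mk'.mpr <| hspan (v := fun n => q n i -ᵥ q n i₀)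
      (fun n => AffineSubspace.vsub_mem_direction (hqA n i) (hqA n i₀))
      ((hqp i).sub (hqp i₀))
  · rw [AffineSubspace.direction_mk']
    exact hspan hu (hue.comp hφ.tendsto_atTop)

end InnerProductSpace

lemma norm_normalize_sub_le {V : Type*} [NormedAddCommGroup V] [NormedSpace ℝ V]
    {w e : V} (hw : w ≠ 0) (he : ‖e‖ = 1) {a : ℝ} (ha : 0 ≤ a) :
    ‖normalize w - e‖ ≤ 2 * ‖w - a • e‖ / ‖w‖ := by
  have hw' : 0 < ‖w‖ := norm_pos_iff.mpr hw
  have hnorm : |a - ‖w‖| ≤ ‖w - a • e‖ := by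
    simpa [norm_smul, he, abs_of_nonneg ha, norm_sub_rev] using abs_norm_sub_norm_le (a • e) w
  have hsplit : ‖w‖ • (normalize w - e) = (w - a • e) + (a - ‖w‖) • e := by
    rw [smul_sub, norm_smul_normalize, sub_smul]; abel
  rw [le_div_iff₀ hw', mul_comm, ← Real.norm_of_nonneg hw'.le, ← norm_smul, hsplit]
  calc ‖(w - a • e) + (a - ‖w‖) • e‖ ≤ ‖w - a • e‖ + |a - ‖w‖| := by
        simpa [norm_smul, he] using norm_add_le (w - a • e) ((a - ‖w‖) • e)
    _ ≤ 2 * ‖w - a • e‖ := by linarith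

lemma norm_normalize_sub_sub_le_of_mem_Qreg {d : ℕ} {v x q : EuclideanSpace ℝ (Fin d)}
    (hv : ‖v‖ = 1) {n : ℕ} (hn : 0 < n) (hx : x ∈ Qreg v n) {M : ℝ} (hM : 0 ≤ M)
    (hq : ‖q‖ ≤ M) (hMn : 2 * M ≤ n) :
    ‖normalize (x - q) - v‖ ≤ (8 + 4 * M) / n := by
  obtain ⟨hcone, hball⟩ := hx
  have hn' : (0 : ℝ) < n := Nat.cast_pos.mpr hn
  have hxn : (n : ℝ) < ‖x‖ := by simpa using hball
  have hdist : infDist x (rayOf v) < 2 * ‖x‖ / n := by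
    refine hcone.trans_lt ?_
    rw [mul_div_assoc]
    linarith [div_pos (hn'.trans hxn) hn']
  obtain ⟨_, ⟨a, ha, rfl⟩, hxa⟩ :=
    (infDist_lt_iff (⟨0, 0, le_rfl, (zero_smul ℝ v).symm⟩ : (rayOf v).Nonempty)).mp hdist
  rw [dist_eq_norm] at hxa
  have hxq : ‖x‖ / 2 ≤ ‖x - q‖ := by linarith [norm_sub_norm_le x q]
  have hxq0 : 0 < ‖x - q‖ := by linarith
  have hwa : ‖x - q - a • v‖ ≤ 2 * ‖x‖ / n + M := by
    calc ‖x - q - a • v‖ = ‖(x - a • v) - q‖ := by abel_nf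
      _ ≤ ‖x - a • v‖ + ‖q‖ := norm_sub_le _ _
      _ ≤ 2 * ‖x‖ / n + M := by linarith
  calc ‖normalize (x - q) - v‖ ≤ 2 * ‖x - q - a • v‖ / ‖x - q‖ :=
        norm_normalize_sub_le (norm_pos_iff.mp hxq0) hv ha
    _ ≤ 2 * (2 * ‖x‖ / n + M) / ‖x - q‖ := by gcongr
    _ ≤ (8 + 4 * M) / n := by
        rw [div_add' _ _ _ hn'.ne', mul_div_assoc', div_div, div_le_div_iff₀ (by positivity) hn']
        nlinarith [mul_le_mul_of_nonneg_left hxq (by positivity : (0 : ℝ) ≤ (8 + 4 * M) * n),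
          mul_le_mul_of_nonneg_left hxn.le (by positivity : (0 : ℝ) ≤ M * n)]

lemma tendsto_normalize_sub_of_mem_Qreg {d : ℕ} {v : EuclideanSpace ℝ (Fin d)} (hv : ‖v‖ = 1)
    {x q : ℕ → EuclideanSpace ℝ (Fin d)} (hx : ∀ n, x n ∈ Qreg v (n + 1)) {M : ℝ}
    (hq : ∀ n, ‖q n‖ ≤ M) :
    Tendsto (fun n => normalize (x n - q n)) atTop (𝓝 v) := by
  have hM : 0 ≤ M := (norm_nonneg _).trans (hq 0)
  rw [tendsto_iff_norm_sub_tendsto_zero]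
  refine squeeze_zero' (Eventually.of_forall fun _ => norm_nonneg _) ?_
    ((tendsto_const_div_atTop_nhds_zero_nat (8 + 4 * M)).comp (tendsto_add_atTop_nat 1))
  filter_upwards [eventually_ge_atTop ⌈2 * M⌉₊] with n hn
  have := norm_normalize_sub_sub_le_of_mem_Qreg hv n.succ_pos (hx n) hM (hq n)
    (by have := Nat.le_ceil (2 * M); push_cast; linarith [(Nat.cast_le (α := ℝ)).mpr hn])
  simpa using this

lemma norm_eLast {d : ℕ} (hd : 0 < d) : ‖eLast d‖ = 1 := by
  have : eLast d = EuclideanSpace.single (⟨d - 1, by omega⟩ : Fin d) (1 : ℝ) := by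
    ext i
    simp [eLast, Fin.ext_iff]
  simp [this]

theorem stmt16_general (d k : ℕ) (hk1 : 1 ≤ k) (hk2 : k ≤ d - 1)
    (S : Fin (k + 1) → Set (EuclideanSpace ℝ (Fin d)))
    (hcomp : ∀ i, IsCompact (S i))
    (hnoline : ∀ f : Set (EuclideanSpace ℝ (Fin d)), IsKFlat k f →
      (∀ i, (f ∩ S i).Nonempty) →
      ¬ ∃ p : EuclideanSpace ℝ (Fin d), ∀ t : ℝ, p + t • eLast d ∈ f) :
    ∃ n' : ℕ, 0 < n' ∧
      ∀ f : Set (EuclideanSpace ℝ (Fin d)), IsKFlat k f →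
        (∀ i, (f ∩ S i).Nonempty) → Qreg (eLast d) n' ∩ f = ∅ := by
  by_contra! h
  choose f hf hfS x hx using fun n : ℕ => h (n + 1) n.succ_pos
  choose A _ hA hfA using hf
  obtain rfl : f = fun n => (A n : Set _) := funext hfA
  choose q hq using fun n => hfS n 0
  obtain ⟨M, hM⟩ := (hcomp 0).isBounded.exists_norm_le
  have hu : ∀ n, normalize (x n - q n) ∈ (A n).direction := fun n =>
    smul_mem _ _ (AffineSubspace.vsub_mem_direction (hx n).2 (hq n).1)
  obtain ⟨A', hA', hA'S, he⟩ := exists_affineSubspace_of_tendsto_mem_direction hcomp hA hfS hu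
    (tendsto_normalize_sub_of_mem_Qreg (norm_eLast (by omega)) (fun n => by exact_mod_cast (hx n).1)
      fun n => hM _ (hq n).2)
  obtain ⟨p, hp, -⟩ := hA'S 0
  refine hnoline A' ⟨A', ⟨p, hp⟩, hA', rfl⟩ hA'S ⟨p, fun t => ?_⟩
  rw [add_comm]
  exact AffineSubspace.vadd_mem_of_mem_direction (smul_mem _ t he) hp

theorem stmt16 (d k : ℕ) (hk1 : 1 ≤ k) (hk2 : k ≤ d - 1)
    (S : Fin (k + 1) → Set (EuclideanSpace ℝ (Fin d)))
    (hcomp : ∀ i, IsCompact (S i)) (hconv : ∀ i, Convex ℝ (S i))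
    (hnoline : ∀ f : Set (EuclideanSpace ℝ (Fin d)), IsKFlat k f →
      (∀ i, (f ∩ S i).Nonempty) →
      ¬ ∃ p : EuclideanSpace ℝ (Fin d), ∀ t : ℝ, p + t • eLast d ∈ f) :
    ∃ n' : ℕ, 0 < n' ∧
      ∀ f : Set (EuclideanSpace ℝ (Fin d)), IsKFlat k f →
        (∀ i, (f ∩ S i).Nonempty) → Qreg (eLast d) n' ∩ f = ∅ :=
  stmt16_general d k hk1 hk2 S hcomp hnoline
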